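/- Define f₁ : ℝ² → ℝ by f₁(x) := 2x₁² + x₂² + x₂ + x₁² sin(ln|x₁|) if x₁ ≠ 0, and f₁(x) := x₂² + x₂ if x₁ = 0; set f₂ := −f₁, g₁(x) := −x₂, and Q0 := {x ∈ ℝ² : g₁(x) ≤ 0} = {x ∈ ℝ² : x₂ ≥ 0}. Then x⁰ := (0,0) is a Geoffrion properly efficient solution of the problem of minimizing (f₁, f₂) over Q0. -/

import Mathlib

/-!
Since `f₂ = -f₁`, no point can improve one objective without worsening the other by exactly the
same amount. Hence every feasible point, in particular `x⁰`, is efficient, and Geoffrion's trade-off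
ratios all equal `1`.
-/

open Filter Topology Set

noncomputable section

/-- The `C^{1,1}` function `f₁` of Example 4.1. -/
def f1 (x : EuclideanSpace ℝ (Fin 2)) : ℝ :=
  if x 0 = 0 then (x 1) ^ 2 + x 1
  else 2 * (x 0) ^ 2 + (x 1) ^ 2 + x 1 + (x 0) ^ 2 * Real.sin (Real.log |x 0|)

/-- The objective family `(f₁, f₂)` with `f₂ = −f₁`. -/
def fpair : Fin 2 → EuclideanSpace ℝ (Fin 2) → ℝ :=
  ![f1, fun x => -f1 x]

/-- The constraint `g₁(x) = −x₂`. -/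
def g1 (x : EuclideanSpace ℝ (Fin 2)) : ℝ := -(x 1)

/-- The feasible set `Q₀ = {x : g₁(x) ≤ 0}`. -/
def Q0 : Set (EuclideanSpace ℝ (Fin 2)) := {x | g1 x ≤ 0}

section NegPair

variable {α : Type*} (f : α → ℝ) (x₀ x : α)

theorem negPair_not_dominates :
    ¬ ((∀ i : Fin 2, ![f, fun y => -f y] i x ≤ ![f, fun y => -f y] i x₀) ∧
        ∃ k : Fin 2, ![f, fun y => -f y] k x < ![f, fun y => -f y] k x₀) := by
  rintro ⟨hle, k, hk⟩
  have h₀ : f x ≤ f x₀ := hle 0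
  have h₁ : -f x ≤ -f x₀ := hle 1
  fin_cases k
  · exact (show f x < f x₀ from hk).not_ge (by linarith)
  · exact (show -f x < -f x₀ from hk).not_ge (by linarith)

theorem negPair_tradeoff_eq_one (i : Fin 2)
    (hi : ![f, fun y => -f y] i x < ![f, fun y => -f y] i x₀) :
    ∃ j : Fin 2, ![f, fun y => -f y] j x₀ < ![f, fun y => -f y] j x ∧
      (![f, fun y => -f y] i x₀ - ![f, fun y => -f y] i x) /
        (![f, fun y => -f y] j x - ![f, fun y => -f y] j x₀) = 1 := by
  fin_cases i
  · have hi : f x < f x₀ := hi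
    refine ⟨1, show -f x₀ < -f x by linarith, ?_⟩
    change (f x₀ - f x) / (-f x - -f x₀) = 1
    rw [neg_sub_neg]
    exact div_self (sub_ne_zero.2 hi.ne')
  · have hi : -f x < -f x₀ := hi
    refine ⟨0, show f x₀ < f x by linarith, ?_⟩
    change (-f x₀ - -f x) / (f x - f x₀) = 1
    rw [neg_sub_neg]
    exact div_self (sub_ne_zero.2 (neg_lt_neg_iff.1 hi).ne')

end NegPair

/-- Example 4.1: `x⁰ = (0,0)` is a Geoffrion properly efficient solution of the
problem of minimizing `(f₁, f₂)` over `Q₀`. -/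
theorem stmt_17 :
    (0 : EuclideanSpace ℝ (Fin 2)) ∈ Q0 ∧
    (¬ ∃ x ∈ Q0, (∀ i : Fin 2, fpair i x ≤ fpair i 0) ∧
        ∃ k : Fin 2, fpair k x < fpair k 0) ∧
    ∃ M > (0 : ℝ), ∀ i : Fin 2, ∀ x ∈ Q0, fpair i x < fpair i 0 →
      ∃ j : Fin 2, fpair j 0 < fpair j x ∧
        (fpair i 0 - fpair i x) / (fpair j x - fpair j 0) ≤ M := by
  refine ⟨?_, ?_, 1, one_pos, ?_⟩
  · simp [Q0, g1]
  · rintro ⟨x, -, hx⟩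
    exact negPair_not_dominates f1 0 x hx
  · intro i x _ hi
    obtain ⟨j, hj, hratio⟩ := negPair_tradeoff_eq_one f1 0 x i hi
    exact ⟨j, hj, hratio.le⟩
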